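/- arXiv:math/0404170 — 2 statements merged into one kernel-verified Lean document; each statement's English description precedes it below -/
import Mathlib

section
/- Let f be a bounded measurable function on ℝ and x ∈ ℝ a point at which the one-sided limits f(x⁺) = lim_{y→x⁺} f(y) and f(x⁻) = lim_{y→x⁻} f(y) both exist. Let φ be a continuous integrable even function on ℝ (φ(−x) = φ(x) for all x) with ∫_ℝ φ = 1, and set φ_t(x) = t^{-1} φ(t^{-1} x) for t > 0. Then (f * φ_t)(x) → (f(x⁺) + f(x⁻))/2 as t → 0⁺. -/
open MeasureTheory Filter Topology

open Set

theorem half_int (φ : ℝ → ℝ) (hφi : Integrable φ) (hφe : ∀ y : ℝ, φ (-y) = φ y)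
    (hφ1 : ∫ y, φ y = 1) : ∫ y in Ioi (0:ℝ), φ y = 1/2 := by
  have h1 : ∫ y in Iic (0:ℝ), φ y = ∫ y in Ioi (0:ℝ), φ y := by
    have := integral_comp_neg_Iic (0:ℝ) φ
    simp only [hφe, neg_zero] at this
    exact this
  have h2 := intervalIntegral.integral_Iic_add_Ioi (b := (0:ℝ)) (μ := volume)
    (hφi.integrableOn (s := Iic 0)) (hφi.integrableOn (s := Ioi 0))
  rw [h1, hφ1] at h2
  linarith

theorem cov (f φ : ℝ → ℝ) (x t : ℝ) (ht : 0 < t) :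
    (∫ y, f y * (t⁻¹ * φ (t⁻¹ * (x - y)))) = ∫ z, f (x - t * z) * φ z := by
  have h0 : (∫ y, f (x - y) * (t⁻¹ * φ (t⁻¹ * y)))
      = ∫ y, f y * (t⁻¹ * φ (t⁻¹ * (x - y))) := by
    calc ∫ y, f (x - y) * (t⁻¹ * φ (t⁻¹ * y))
        = ∫ y, (fun u => f u * (t⁻¹ * φ (t⁻¹ * (x - u)))) (x + -y) := by
          congr 1; ext y
          simp only [← sub_eq_add_neg, sub_sub_cancel]
      _ = ∫ y, (fun u => f u * (t⁻¹ * φ (t⁻¹ * (x - u)))) (x + y) :=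
          integral_neg_eq_self (μ := volume)
            (fun y => (fun u => f u * (t⁻¹ * φ (t⁻¹ * (x - u)))) (x + y))
      _ = ∫ y, f y * (t⁻¹ * φ (t⁻¹ * (x - y))) := by
          exact integral_add_left_eq_self (μ := volume) (fun u => f u * (t⁻¹ * φ (t⁻¹ * (x - u)))) x
  have h1 := MeasureTheory.Measure.integral_comp_mul_left
    (fun u => f (x - u) * (t⁻¹ * φ (t⁻¹ * u))) t
  simp only [inv_mul_cancel_left₀ ht.ne'] at h1
  rw [h0, abs_of_pos (inv_pos.2 ht), smul_eq_mul] at h1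
  calc (∫ y, f y * (t⁻¹ * φ (t⁻¹ * (x - y))))
      = t * (t⁻¹ * ∫ y, f y * (t⁻¹ * φ (t⁻¹ * (x - y)))) := by
        rw [← mul_assoc, mul_inv_cancel₀ ht.ne', one_mul]
    _ = t * ∫ z, f (x - t * z) * (t⁻¹ * φ z) := by rw [← h1]
    _ = ∫ z, t * (f (x - t * z) * (t⁻¹ * φ z)) := by
        rw [← integral_const_mul]
    _ = ∫ z, f (x - t * z) * φ z := by
        congr 1; ext z
        field_simp


/-- If `f` is a bounded measurable function on `ℝ` having one-sided limits `Lp`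
(from the right) and `Lm` (from the left) at a point `x`, and `φ` is a continuous
integrable even function on `ℝ` with integral `1`, with `φ_t (x) = t⁻¹ φ (t⁻¹ x)`,
then `(f * φ_t) (x) → (Lp + Lm) / 2` as `t → 0⁺`. -/
theorem convolution_dilate_tendsto_average_of_one_sided_limits
    (f : ℝ → ℝ) (hfm : Measurable f) (hfb : ∃ M : ℝ, ∀ y, |f y| ≤ M)
    (x Lp Lm : ℝ)
    (hLp : Tendsto f (𝓝[>] x) (𝓝 Lp)) (hLm : Tendsto f (𝓝[<] x) (𝓝 Lm))
    (φ : ℝ → ℝ) (hφc : Continuous φ) (hφi : Integrable φ)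
    (hφe : ∀ y : ℝ, φ (-y) = φ y) (hφ1 : ∫ y, φ y = 1) :
    Tendsto (fun t : ℝ => ∫ y, f y * (t⁻¹ * φ (t⁻¹ * (x - y))))
      (𝓝[>] 0) (𝓝 ((Lp + Lm) / 2)) := by
  obtain ⟨M, hM⟩ := hfb
  set L : ℝ → ℝ := fun z => (if 0 < z then Lm else Lp) * φ z with hL
  -- integrability of L
  have hLi : Integrable L := by
    have : Integrable (fun z => (max |Lm| |Lp|) * |φ z|) := (hφi.norm.const_mul _)
    refine this.mono' ?_ (Eventually.of_forall fun z => ?_)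
    · exact ((measurable_const.ite measurableSet_Ioi measurable_const).mul
        hφc.measurable).aestronglyMeasurable
    · simp only [hL, Real.norm_eq_abs, abs_mul]
      apply mul_le_mul_of_nonneg_right _ (abs_nonneg _)
      have : |(if 0 < z then Lm else Lp)| ≤ max |Lm| |Lp| := by
        split_ifs
        · exact le_max_left _ _
        · exact le_max_right _ _
      exact this
  -- value of ∫ L
  have hIoi : ∫ z in Ioi (0:ℝ), φ z = 1/2 := half_int φ hφi hφe hφ1
  have hIic : ∫ z in Iic (0:ℝ), φ z = 1/2 := by
    have h2 := intervalIntegral.integral_Iic_add_Ioi (b := (0:ℝ)) (μ := volume)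
      (hφi.integrableOn (s := Iic 0)) (hφi.integrableOn (s := Ioi 0))
    rw [hIoi, hφ1] at h2; linarith
  have hLint : ∫ z, L z = (Lp + Lm) / 2 := by
    have hsplit := intervalIntegral.integral_Iic_add_Ioi (b := (0:ℝ)) (μ := volume)
      (hLi.integrableOn (s := Iic 0)) (hLi.integrableOn (s := Ioi 0))
    have e1 : ∫ z in Iic (0:ℝ), L z = Lp * (1/2) := by
      rw [← hIic, ← integral_const_mul]
      refine setIntegral_congr_fun measurableSet_Iic fun z hz => ?_
      simp only [hL]
      rw [if_neg (by simpa using not_lt.2 (hz : z ≤ 0))]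
    have e2 : ∫ z in Ioi (0:ℝ), L z = Lm * (1/2) := by
      rw [← hIoi, ← integral_const_mul]
      refine setIntegral_congr_fun measurableSet_Ioi fun z hz => ?_
      simp only [hL]
      rw [if_pos (show (0:ℝ) < z from hz)]
    rw [e1, e2] at hsplit
    rw [← hsplit]; ring
  rw [← hLint]
  -- dominated convergence
  have main : Tendsto (fun t : ℝ => ∫ z, f (x - t * z) * φ z) (𝓝[>] 0) (𝓝 (∫ z, L z)) := by
    refine tendsto_integral_filter_of_dominated_convergence (fun z => M * |φ z|)
      ?_ ?_ (hφi.norm.const_mul M) ?_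
    · exact Eventually.of_forall fun t =>
        ((hfm.comp (measurable_const.sub (measurable_const.mul measurable_id))).mul
          hφc.measurable).aestronglyMeasurable
    · refine Eventually.of_forall fun t => Eventually.of_forall fun z => ?_
      simp only [norm_mul, Real.norm_eq_abs]
      gcongr
      exact hM _
    · have hz0 : ∀ᵐ z : ℝ, z ≠ 0 := by
        refine (ae_iff).2 ?_
        simp [show {z : ℝ | ¬ z ≠ 0} = {0} by ext z; simp]
      filter_upwards [hz0] with z hz
      rcases lt_or_gt_of_ne hz with hzneg | hzpos
      · -- z < 0 : x - t z > x, tends to x from the right, f → Lp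
        have harg : Tendsto (fun t : ℝ => x - t * z) (𝓝[>] 0) (𝓝[>] x) := by
          apply tendsto_nhdsWithin_of_tendsto_nhds_of_eventually_within
          · have : Tendsto (fun t : ℝ => x - t * z) (𝓝 0) (𝓝 (x - 0 * z)) := by
              exact (tendsto_const_nhds.sub ((continuous_id.mul continuous_const).tendsto 0))
            simpa using this.mono_left nhdsWithin_le_nhds
          · filter_upwards [self_mem_nhdsWithin] with t (ht : 0 < t)
            have : t * z < 0 := mul_neg_of_pos_of_neg ht hzneg
            simp only [mem_Ioi]; linarith
        have := (hLp.comp harg).mul (tendsto_const_nhds (x := φ z))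
        simpa [hL, if_neg (not_lt.2 hzneg.le), Function.comp] using this
      · have harg : Tendsto (fun t : ℝ => x - t * z) (𝓝[>] 0) (𝓝[<] x) := by
          apply tendsto_nhdsWithin_of_tendsto_nhds_of_eventually_within
          · have : Tendsto (fun t : ℝ => x - t * z) (𝓝 0) (𝓝 (x - 0 * z)) := by
              exact (tendsto_const_nhds.sub ((continuous_id.mul continuous_const).tendsto 0))
            simpa using this.mono_left nhdsWithin_le_nhds
          · filter_upwards [self_mem_nhdsWithin] with t (ht : 0 < t)
            have : 0 < t * z := mul_pos ht hzpos
            simp only [mem_Iio]; linarith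
        have := (hLm.comp harg).mul (tendsto_const_nhds (x := φ z))
        simpa [hL, if_pos hzpos, Function.comp] using this
  refine main.congr' ?_
  filter_upwards [self_mem_nhdsWithin] with t (ht : 0 < t)
  exact (cov f φ x t ht).symm
end

section
/- Let f be a continuous function on ℝ with compact support, and let ψ be a bounded, uniformly continuous, integrable function on ℝ. Then for every ε > 0 there exist finitely many points y_1, …, y_N ∈ ℝ and real coefficients c_1, …, c_N such that sup_{x ∈ ℝ} | (f * ψ)(x) − Σ_{i=1}^N c_i ψ(x − y_i) | < ε; that is, the convolution f * ψ can be uniformly approximated on ℝ by finite linear combinations of translates of ψ. -/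
open MeasureTheory Filter Topology
open scoped BoundedContinuousFunction

/-!
As `ψ` is bounded and uniformly continuous, `y ↦ ψ (· - y)` is a continuous map into the Banach
space of bounded continuous functions with the sup norm. Hence `f * ψ` is the Bochner integral
`∫ f y • ψ (· - y) dy` of a continuous compactly supported function with values in that space,
and such an integral lies in the closed linear span of its integrand's values: `f * ψ` is a
sup-norm limit of linear combinations of translates of `ψ`.
-/

theorem Submodule.integral_mem_of_isClosed {X E : Type*} [MeasurableSpace X] {μ : Measure X}
    [NormedAddCommGroup E] [NormedSpace ℝ E] [CompleteSpace E] {K : Submodule ℝ E}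
    (hK : IsClosed (K : Set E)) {F : X → E} (hF : ∀ x, F x ∈ K) : ∫ x, F x ∂μ ∈ K := by
  have : CompleteSpace K := hK.completeSpace_coe
  change ∫ x, K.subtypeₗᵢ ⟨F x, hF x⟩ ∂μ ∈ K
  rw [LinearIsometry.integral_comp_comm]
  exact Submodule.coe_mem _

namespace BoundedContinuousFunction

section Translate

variable {G E : Type*} [SeminormedAddCommGroup G] [PseudoMetricSpace E]

def translate (ψ : G →ᵇ E) (y : G) : G →ᵇ E :=
  ψ.compContinuous ⟨fun x => x - y, by fun_prop⟩

@[simp]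
theorem translate_apply (ψ : G →ᵇ E) (y x : G) : ψ.translate y x = ψ (x - y) := rfl

theorem uniformContinuous_translate {ψ : G →ᵇ E} (hψ : UniformContinuous ψ) :
    UniformContinuous ψ.translate := by
  rw [Metric.uniformContinuous_iff] at hψ ⊢
  intro ε hε
  obtain ⟨δ, hδ, hψδ⟩ := hψ (ε / 2) (half_pos hε)
  refine ⟨δ, hδ, fun {y y'} hy => lt_of_le_of_lt ?_ (half_lt_self hε)⟩
  exact (dist_le (half_pos hε).le).2 fun x =>
    (hψδ (show dist (x - y) (x - y') < δ by rwa [dist_sub_left])).le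

end Translate

section Convolution

variable {G E : Type*} [SeminormedAddCommGroup G] [MeasurableSpace G] {μ : Measure G}
  [NormedAddCommGroup E] [NormedSpace ℝ E] [CompleteSpace E]

theorem integral_smul_translate_mem_closure_span (f : G → ℝ) (ψ : G →ᵇ E) :
    ∫ z, f z • ψ.translate z ∂μ ∈
      closure (Submodule.span ℝ (Set.range ψ.translate) : Set (G →ᵇ E)) := by
  rw [← Submodule.topologicalClosure_coe]
  refine Submodule.integral_mem_of_isClosed (Submodule.isClosed_topologicalClosure _) fun z => ?_
  exact Submodule.le_topologicalClosure _
    (Submodule.smul_mem _ _ (Submodule.subset_span (Set.mem_range_self z)))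

theorem integral_smul_translate_apply [OpensMeasurableSpace G] [IsFiniteMeasureOnCompacts μ]
    {f : G → ℝ} (hf : Continuous f) (hfs : HasCompactSupport f)
    {ψ : G →ᵇ E} (hψ : UniformContinuous ψ) (x : G) :
    (∫ z, f z • ψ.translate z ∂μ) x = ∫ z, f z • ψ (x - z) ∂μ := by
  have hint : Integrable (fun z => f z • ψ.translate z) μ :=
    (hf.smul (uniformContinuous_translate hψ).continuous).integrable_of_hasCompactSupport
      hfs.smul_right
  exact ((evalCLM ℝ x).integral_comp_comm hint).symm

end Convolution

end BoundedContinuousFunction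

theorem convolution_approx_by_translates_general
    (f ψ : ℝ → ℝ) (hfc : Continuous f) (hfs : HasCompactSupport f)
    (hψb : ∃ M : ℝ, ∀ x, |ψ x| ≤ M) (hψu : UniformContinuous ψ)
    (ε : ℝ) (hε : 0 < ε) :
    ∃ (N : ℕ) (y c : Fin N → ℝ),
      ∀ x : ℝ, |(∫ z, f z * ψ (x - z)) - ∑ i, c i * ψ (x - y i)| < ε := by
  obtain ⟨M, hM⟩ := hψb
  let Ψ : ℝ →ᵇ ℝ := .ofNormedAddCommGroup ψ hψu.continuous M hM
  obtain ⟨b, hb, hdist⟩ := Metric.mem_closure_iff.1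
    (BoundedContinuousFunction.integral_smul_translate_mem_closure_span (μ := volume) f Ψ) ε hε
  obtain ⟨N, c, g, rfl⟩ := Submodule.mem_span_set'.1 hb
  choose y hy using fun i => (g i).2
  refine ⟨N, y, c, fun x => ?_⟩
  have h := (BoundedContinuousFunction.dist_coe_le_dist x).trans_lt hdist
  rw [BoundedContinuousFunction.integral_smul_translate_apply hfc hfs hψu x] at h
  simpa [Ψ, ← hy, Real.dist_eq] using h

/-- If `f` is continuous with compact support on `ℝ` and `ψ` is bounded, uniformly
continuous, and integrable on `ℝ`, then the convolution `f * ψ` can be uniformly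
approximated on `ℝ` by finite linear combinations of translates of `ψ`. -/
theorem convolution_approx_by_translates
    (f ψ : ℝ → ℝ) (hfc : Continuous f) (hfs : HasCompactSupport f)
    (hψb : ∃ M : ℝ, ∀ x, |ψ x| ≤ M) (hψu : UniformContinuous ψ)
    (hψi : Integrable ψ) (ε : ℝ) (hε : 0 < ε) :
    ∃ (N : ℕ) (y c : Fin N → ℝ),
      ∀ x : ℝ, |(∫ z, f z * ψ (x - z)) - ∑ i, c i * ψ (x - y i)| < ε :=
  convolution_approx_by_translates_general f ψ hfc hfs hψb hψu ε hε
end
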